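/- arXiv:2006.10894 — 6 statements merged into one kernel-verified Lean document; each statement's English description precedes it below -/
import Mathlib

section
/- For all real numbers n and k with 2n ≥ 7 and k > 1/2, one has k + (n − 3 − k)/(2k − 1) ≥ √(2n − 7). (Consequently, the function f(k) = k + (n−3−k)/(2k−1) attains its minimum value √(2n−7) on the interval k > 1/2.) -/
theorem stmt_0 (n k : ℝ) (hn : 2 * n ≥ 7) (hk : k > 1 / 2) :
    k + (n - 3 - k) / (2 * k - 1) ≥ Real.sqrt (2 * n - 7) := by
  have ht : 2 * k - 1 > 0 := by linarith
  set s := Real.sqrt (2 * n - 7) with hs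
  have hs0 : 0 ≤ s := Real.sqrt_nonneg _
  have hs2 : s ^ 2 = 2 * n - 7 := Real.sq_sqrt (by linarith)
  have hd : (n - 3 - k) / (2 * k - 1) * (2 * k - 1) = n - 3 - k :=
    div_mul_cancel₀ _ (ne_of_gt ht)
  nlinarith [sq_nonneg (k - (s + 1) / 2), mul_pos ht ht]
end

section
/- For all integers n ≥ 4 and k ≥ 1, one has k + ⌈(n − 3 − k)/(2k − 1)⌉ ≥ ⌈√(2n − 7)⌉, where the inner ceiling is applied to the real quotient (n − 3 − k)/(2k − 1) and the outer ceiling to the real square root √(2n − 7). -/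
/-
Write m = 2k - 1 and a = 2n - 7. Since 2k² - 2k = (m² - 1)/2, the left-hand side is
k + ⌈(n - 3 - k)/m⌉ = ⌈(m² + a)/(2m)⌉, and (m² + a)/(2m) ≥ √a is AM-GM for m² and a.
-/

theorem Real.sqrt_le_sq_add_div_two_mul {a m : ℝ} (ha : 0 ≤ a) (hm : 0 < m) :
    √a ≤ (m ^ 2 + a) / (2 * m) := by
  rw [le_div_iff₀ (by positivity)]
  nlinarith [two_mul_le_add_sq (√a) m, Real.sq_sqrt ha]

theorem stmt_1 (n k : ℤ) (hn : n ≥ 4) (hk : k ≥ 1) :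
    k + ⌈((n : ℝ) - 3 - (k : ℝ)) / (2 * (k : ℝ) - 1)⌉ ≥ ⌈Real.sqrt (2 * (n : ℝ) - 7)⌉ := by
  have hm : (0 : ℝ) < 2 * k - 1 := by
    have : (1 : ℝ) ≤ k := by exact_mod_cast hk
    linarith
  have ha : (0 : ℝ) ≤ 2 * n - 7 := by
    have : (4 : ℝ) ≤ n := by exact_mod_cast hn
    linarith
  have hlhs : (k : ℝ) + (n - 3 - k) / (2 * k - 1)
      = ((2 * k - 1) ^ 2 + (2 * n - 7)) / (2 * (2 * k - 1)) := by
    rw [eq_div_iff (by positivity)]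
    linear_combination 2 * div_mul_cancel₀ ((n : ℝ) - 3 - k) hm.ne'
  rw [ge_iff_le, ← Int.ceil_intCast_add, hlhs]
  exact Int.ceil_mono (Real.sqrt_le_sq_add_div_two_mul ha hm)
end

section
/- For all integers n and k with n > 10 and 2 ≤ k < ⌈(n − 4)/3⌉, one has n − (k − 1)·(2·⌈(n − 5 − k)/(2k − 1)⌉ + 1) ≤ 6 + ⌈(n − 5 − k)/(2k − 1)⌉, where the ceilings are applied to the indicated real quotients. -/
theorem stmt_5 (n k : ℤ) (hn : n > 10) (hk : 2 ≤ k)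
    (hk' : k < ⌈((n : ℝ) - 4) / 3⌉) :
    n - (k - 1) * (2 * ⌈((n : ℝ) - 5 - (k : ℝ)) / (2 * (k : ℝ) - 1)⌉ + 1) ≤
      6 + ⌈((n : ℝ) - 5 - (k : ℝ)) / (2 * (k : ℝ) - 1)⌉ := by
  set c : ℤ := ⌈((n : ℝ) - 5 - (k : ℝ)) / (2 * (k : ℝ) - 1)⌉ with hc
  have hkR : (2:ℝ) ≤ (k:ℝ) := by exact_mod_cast hk
  have hk2 : (0:ℝ) < 2 * (k:ℝ) - 1 := by linarith
  have h := Int.le_ceil (((n : ℝ) - 5 - (k : ℝ)) / (2 * (k : ℝ) - 1))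
  rw [div_le_iff₀ hk2, ← hc] at h
  have hz : (n:ℤ) - 5 - k ≤ c*(2*k-1) := by exact_mod_cast h
  nlinarith [hz]
end

section
/- Let m ≥ 1 and k be integers with 1 ≤ k ≤ m. In the path graph P_m there exists a set S of exactly k vertices such that every vertex of P_m is at graph distance at most ⌈(m − k)/(2k − 1)⌉ from some vertex of S, where the ceiling is applied to the real quotient (m − k)/(2k − 1). -/
lemma pathGraph_walk_of_add {m : ℕ} : ∀ (d : ℕ) (u v : Fin m), u.val + d = v.val →
    ∃ w : (SimpleGraph.pathGraph m).Walk u v, w.length = d := by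
  intro d
  induction d with
  | zero =>
    intro u v h
    have : u = v := Fin.ext (by omega)
    subst this
    exact ⟨SimpleGraph.Walk.nil, rfl⟩
  | succ d ih =>
    intro u v h
    have hu1 : u.val + 1 < m := by have := v.isLt; omega
    let u' : Fin m := ⟨u.val + 1, hu1⟩
    have hadj : (SimpleGraph.pathGraph m).Adj u u' := by
      rw [SimpleGraph.pathGraph_adj]; left; rfl
    obtain ⟨w, hw⟩ := ih u' v (by simp [u']; omega)
    exact ⟨SimpleGraph.Walk.cons hadj w, by simp [hw]⟩

lemma pathGraph_dist_le {m : ℕ} (u v : Fin m) :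
    (SimpleGraph.pathGraph m).dist u v ≤ Nat.dist u.val v.val := by
  rcases le_total u.val v.val with h | h
  · obtain ⟨w, hw⟩ := pathGraph_walk_of_add (v.val - u.val) u v (by omega)
    have := SimpleGraph.dist_le w
    rw [hw] at this
    simp only [Nat.dist]
    omega
  · obtain ⟨w, hw⟩ := pathGraph_walk_of_add (u.val - v.val) v u (by omega)
    have := SimpleGraph.dist_le w
    rw [hw, SimpleGraph.dist_comm] at this
    simp only [Nat.dist]
    omega

theorem stmt_6 (m k : ℕ) (hm : 1 ≤ m) (hk : 1 ≤ k) (hkm : k ≤ m) :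
    ∃ S : Finset (Fin m), S.card = k ∧
      ∀ v : Fin m, ∃ s ∈ S,
        (((SimpleGraph.pathGraph m).dist v s : ℤ)) ≤
          ⌈((m : ℝ) - (k : ℝ)) / (2 * (k : ℝ) - 1)⌉ := by
  set R : ℤ := ⌈((m : ℝ) - (k : ℝ)) / (2 * (k : ℝ) - 1)⌉ with hR
  have hden : (0 : ℝ) < 2 * (k : ℝ) - 1 := by
    have : (1 : ℝ) ≤ (k : ℝ) := by exact_mod_cast hk
    linarith
  have hRnonneg : 0 ≤ R := by
    rw [hR]
    apply Int.ceil_nonneg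
    apply div_nonneg _ hden.le
    have : (k : ℝ) ≤ (m : ℝ) := by exact_mod_cast hkm
    linarith
  -- key: (2k-1) * R ≥ m - k
  have hkey : (m : ℤ) - k ≤ (2 * k - 1) * R := by
    have h1 : ((m : ℝ) - (k : ℝ)) / (2 * (k : ℝ) - 1) ≤ (R : ℝ) := Int.le_ceil _
    have h2 : ((m : ℝ) - (k : ℝ)) ≤ (2 * (k : ℝ) - 1) * (R : ℝ) := by
      rw [div_le_iff₀ hden] at h1
      linarith
    exact_mod_cast (by push_cast; linarith : ((m : ℤ) - k : ℝ) ≤ ((2 * (k:ℤ) - 1) * R : ℝ))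
  set r : ℕ := R.toNat with hr
  have hrR : (r : ℤ) = R := Int.toNat_of_nonneg hRnonneg
  have hcover : m ≤ k * (2 * r + 1) := by
    have h2 : (m : ℤ) ≤ (k : ℤ) * (2 * r + 1) := by
      have hk' : (1 : ℤ) ≤ (k : ℤ) := by exact_mod_cast hk
      nlinarith [hRnonneg, hkey, hrR]
    exact_mod_cast h2
  -- centers
  set c : ℕ → Fin m := fun i => ⟨min (i * (2 * r + 1) + r) (m - 1), by omega⟩ with hc
  set S₀ : Finset (Fin m) := (Finset.range k).image c with hS₀
  have hS₀card : S₀.card ≤ k := le_trans (Finset.card_image_le) (by simp)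
  obtain ⟨S, hsub, _, hScard⟩ := Finset.exists_subsuperset_card_eq
    (S₀.subset_univ) hS₀card (by simp [hkm])
  refine ⟨S, hScard, fun v => ?_⟩
  have hv : v.val < k * (2 * r + 1) := lt_of_lt_of_le v.isLt hcover
  set i : ℕ := v.val / (2 * r + 1) with hi
  have hik : i < k := by
    rw [hi]
    exact Nat.div_lt_of_lt_mul (by rw [Nat.mul_comm]; exact hv)
  refine ⟨c i, hsub (Finset.mem_image_of_mem c (Finset.mem_range.mpr hik)), ?_⟩
  have hmod := Nat.div_add_mod v.val (2 * r + 1)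
  rw [← hi] at hmod
  have hmlt : v.val % (2 * r + 1) < 2 * r + 1 := Nat.mod_lt _ (by omega)
  have hcomm : i * (2 * r + 1) = (2 * r + 1) * i := Nat.mul_comm _ _
  have hlo : i * (2 * r + 1) ≤ v.val := by omega
  have hhi : v.val < i * (2 * r + 1) + (2 * r + 1) := by omega
  have hdist : Nat.dist v.val (c i).val ≤ r := by
    have hcval : (c i).val = min (i * (2 * r + 1) + r) (m - 1) := rfl
    have hvm : v.val < m := v.isLt
    rcases le_or_gt (i * (2 * r + 1) + r) (m - 1) with h | h
    · rw [hcval, min_eq_left h]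
      simp only [Nat.dist]
      omega
    · rw [hcval, min_eq_right h.le]
      simp only [Nat.dist]
      omega
  calc ((SimpleGraph.pathGraph m).dist v (c i) : ℤ)
      ≤ (Nat.dist v.val (c i).val : ℤ) := by exact_mod_cast pathGraph_dist_le v (c i)
    _ ≤ (r : ℤ) := by exact_mod_cast hdist
    _ = R := hrR
end

section
/- Let G be a simple graph of girth at least 5, let u be a vertex of G, let A be a finite set of neighbors of u, let D be a finite set of vertices of G, and let t ≥ 1 be an integer such that every vertex a ∈ A has at least t neighbors in D. Then |D| ≥ |A| · (t − 1). -/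
open SimpleGraph

lemma no4 {V : Type*} (G : SimpleGraph V) (h : 5 ≤ G.egirth) {u a a' d : V}
    (hua : G.Adj u a) (hua' : G.Adj u a') (had : G.Adj a d) (ha'd : G.Adj a' d)
    (haa' : a ≠ a') (hdu : d ≠ u) : False := by
  have hc : (Walk.cons hua (Walk.cons had (Walk.cons ha'd.symm
      (Walk.cons hua'.symm Walk.nil)))).IsCycle := by
    rw [SimpleGraph.Walk.isCycle_def]
    refine ⟨?_, by simp, ?_⟩
    · simp [SimpleGraph.Walk.isTrail_def, Sym2.eq, Sym2.rel_iff', hua.ne, hua'.ne, had.ne,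
        ha'd.ne, haa', hdu, hdu.symm, haa'.symm, hua.ne', hua'.ne', had.ne', ha'd.ne']
    · simp [haa', hdu, had.ne, ha'd.ne', hua.ne', hua'.ne']
  have := SimpleGraph.le_egirth.mp h u _ hc
  simp only [Walk.length_cons, Walk.length_nil] at this
  norm_num at this

theorem stmt_9 {V : Type*} [DecidableEq V] (G : SimpleGraph V) [DecidableRel G.Adj] (hgirth : 5 ≤ G.egirth)
    (u : V) (A D : Finset V) (t : ℕ) (ht : 1 ≤ t)
    (hA : ∀ a ∈ A, G.Adj u a)
    (hD : ∀ a ∈ A, t ≤ (D.filter (fun d => G.Adj a d)).card) :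
    A.card * (t - 1) ≤ D.card := by
  classical
  set f : V → Finset V := fun a => (D.filter (fun d => G.Adj a d)).erase u with hf
  have hcard : ∀ a ∈ A, t - 1 ≤ (f a).card := fun a ha =>
    le_trans (by have := hD a ha; omega) (Finset.pred_card_le_card_erase)
  have hdisj : ∀ a ∈ A, ∀ b ∈ A, a ≠ b → Disjoint (f a) (f b) := by
    intro a ha b hb hab
    refine Finset.disjoint_left.mpr fun d hda hdb => ?_
    simp only [hf, Finset.mem_erase, Finset.mem_filter] at hda hdb
    exact no4 G hgirth (hA a ha) (hA b hb) hda.2.2 hdb.2.2 hab hda.1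
  calc A.card * (t - 1) ≤ ∑ a ∈ A, (f a).card := by
        simpa using Finset.card_nsmul_le_sum A _ _ hcard
    _ = (A.biUnion f).card := (Finset.card_biUnion hdisj).symm
    _ ≤ D.card := Finset.card_le_card fun d hd => by
        obtain ⟨a, _, hd⟩ := Finset.mem_biUnion.mp hd
        exact (Finset.mem_filter.mp (Finset.mem_of_mem_erase hd)).1
end

section
/- Let G be a simple graph that is strongly regular with parameters (10, 3, 0, 1). For all vertices c₁, c₂ and every vertex r with r ∉ N[c₁] ∪ N[c₂], there exists a neighbor s of r such that s ∉ N[c₁] ∪ N[c₂]. (A robber on a vertex not dominated by either of two cops is always adjacent to a vertex not dominated by either cop.) -/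
/-!
A cop `c` outside `N[r]` dominates exactly `μ` neighbours of the robber `r`, namely the common
neighbours of `r` and `c`. So a set `C` of such cops dominates at most `|C| μ` of the `k`
neighbours of `r`, and if `|C| μ < k` (here `2 · 1 < 3`) some neighbour of `r` is adjacent to
no cop; it is no cop either, since `r` is adjacent to none.
-/

open Finset

namespace SimpleGraph

variable {V : Type*} [Fintype V] [DecidableEq V] {G : SimpleGraph V} [DecidableRel G.Adj]

theorem IsSRGWith.card_neighborFinset_inter_of_not_adj {n k ℓ μ : ℕ} (h : G.IsSRGWith n k ℓ μ)
    {v w : V} (hne : v ≠ w) (ha : ¬G.Adj v w) :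
    #(G.neighborFinset v ∩ G.neighborFinset w) = μ := by
  rw [← h.of_not_adj hne ha, ← Set.toFinset_card]
  congr 1
  ext
  rw [Set.mem_toFinset, mem_inter, mem_neighborFinset, mem_neighborFinset, mem_commonNeighbors]

theorem exists_adj_notMem_closedNeighborSet_of_card_mul_lt (C : Finset V) {r : V} {μ : ℕ}
    (hC : ∀ c ∈ C, ¬G.Adj r c ∧ #(G.neighborFinset r ∩ G.neighborFinset c) ≤ μ)
    (hdeg : #C * μ < G.degree r) :
    ∃ s, G.Adj r s ∧ ∀ c ∈ C, s ∉ G.neighborSet c ∪ {c} := by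
  set dominated := C.biUnion fun c ↦ G.neighborFinset r ∩ G.neighborFinset c
  have hcard : #dominated < #(G.neighborFinset r) :=
    calc #dominated ≤ ∑ c ∈ C, #(G.neighborFinset r ∩ G.neighborFinset c) := card_biUnion_le
      _ ≤ ∑ _c ∈ C, μ := sum_le_sum fun c hc ↦ (hC c hc).2
      _ = #C * μ := by rw [sum_const, smul_eq_mul]
      _ < #(G.neighborFinset r) := by rwa [card_neighborFinset_eq_degree]
  obtain ⟨s, hs, hsd⟩ := exists_mem_notMem_of_card_lt_card hcard
  rw [mem_neighborFinset] at hs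
  refine ⟨s, hs, fun c hc hsc ↦ ?_⟩
  rcases hsc with hcs | rfl
  · exact hsd (mem_biUnion.2 ⟨c, hc, by simpa [hs] using hcs⟩)
  · exact (hC s hc).1 hs

theorem IsSRGWith.exists_adj_notMem_closedNeighborSet {n k ℓ μ : ℕ} (h : G.IsSRGWith n k ℓ μ)
    (C : Finset V) {r : V} (hr : ∀ c ∈ C, r ∉ G.neighborSet c ∪ {c}) (hk : #C * μ < k) :
    ∃ s, G.Adj r s ∧ ∀ c ∈ C, s ∉ G.neighborSet c ∪ {c} := by
  refine exists_adj_notMem_closedNeighborSet_of_card_mul_lt (μ := μ) C (fun c hc ↦ ?_) ?_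
  · obtain ⟨hne, hnadj⟩ : r ≠ c ∧ ¬G.Adj r c := by simpa [not_or, adj_comm] using hr c hc
    exact ⟨hnadj, (h.card_neighborFinset_inter_of_not_adj hne hnadj).le⟩
  · rwa [h.regular.degree_eq]

end SimpleGraph

theorem stmt_11 {V : Type*} [Fintype V] (G : SimpleGraph V) [DecidableRel G.Adj]
    (hG : G.IsSRGWith 10 3 0 1) (c₁ c₂ r : V)
    (hr : r ∉ (G.neighborSet c₁ ∪ {c₁}) ∪ (G.neighborSet c₂ ∪ {c₂})) :
    ∃ s, G.Adj r s ∧ s ∉ (G.neighborSet c₁ ∪ {c₁}) ∪ (G.neighborSet c₂ ∪ {c₂}) := by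
  classical
  have hpair (x : V) : (∀ c ∈ ({c₁, c₂} : Finset V), x ∉ G.neighborSet c ∪ {c}) ↔
      x ∉ (G.neighborSet c₁ ∪ {c₁}) ∪ (G.neighborSet c₂ ∪ {c₂}) := by
    simp only [mem_insert, mem_singleton, forall_eq_or_imp, forall_eq, Set.mem_union, not_or]
  have hcops : #{c₁, c₂} * 1 < 3 := by
    have := card_le_two (a := c₁) (b := c₂)
    omega
  obtain ⟨s, hrs, hs⟩ := hG.exists_adj_notMem_closedNeighborSet {c₁, c₂} ((hpair r).2 hr) hcops
  exact ⟨s, hrs, (hpair s).1 hs⟩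
end
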